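/- The set of Martin-Löf random infinite binary sequences has measure 1 with respect to the uniform product measure. -/
import Mathlib


open MeasureTheory
open scoped ENNReal

/-- The length-`n` initial segment of an infinite binary sequence. -/
def pref (x : ℕ → Bool) (n : ℕ) : List Bool := List.ofFn (fun i : Fin n => x i)

/-- A set of binary strings is prefix-free if no member is a proper prefix of another. -/
def PFree (S : Set (List Bool)) : Prop := ∀ a ∈ S, ∀ b ∈ S, a <+: b → a = b

/-- Kolmogorov complexity of `b` relative to machine `M`: the least length of an
input mapped by `M` to `b`, `∞` if there is none. -/
noncomputable def Cpx (M : List Bool →. List Bool) (b : List Bool) : ℕ∞ :=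
  sInf {n : ℕ∞ | ∃ p : List Bool, b ∈ M p ∧ (p.length : ℕ∞) = n}

/-- A universal machine for plain complexity. -/
def Universal (U : List Bool →. List Bool) : Prop :=
  Partrec U ∧ ∀ L : List Bool →. List Bool, Partrec L →
    ∃ k : ℕ, ∀ b : List Bool, Cpx U b ≤ Cpx L b + (k : ℕ∞)

/-- A prefix-free universal machine: prefix-free domain, universal among machines
with prefix-free domain. -/
def PFUniversal (V : List Bool →. List Bool) : Prop :=
  Partrec V ∧ PFree {p | (V p).Dom} ∧
    ∀ L : List Bool →. List Bool, Partrec L → PFree {p | (L p).Dom} →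
      ∃ k : ℕ, ∀ b : List Bool, Cpx V b ≤ Cpx L b + (k : ℕ∞)

/-- `cyl S` is the set of infinite binary sequences extending some member of `S`. -/
def cyl (S : Set (List Bool)) : Set (ℕ → Bool) := {x | ∃ b ∈ S, pref x b.length = b}

/-- The `e`-th computably enumerable set of binary strings. -/
def W (e : ℕ) : Set (List Bool) :=
  {b | ((Denumerable.ofNat Nat.Partrec.Code e).eval (Encodable.encode b)).Dom}

/-- The binary-digit expansion of a real number. -/
noncomputable def binSeq (r : ℝ) : ℕ → Bool := fun n => decide (⌊r * 2 ^ (n + 1)⌋ % 2 = 1)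

/-- The fair-coin (uniform product) measure on Cantor space, as the pushforward of
Lebesgue measure on `(0,1]` under binary expansion. -/
noncomputable def coin : Measure (ℕ → Bool) :=
  Measure.map binSeq (volume.restrict (Set.Ioc (0 : ℝ) 1))

/-- Martin-Löf test in sense 2. -/
def MLTest (f : ℕ → ℕ) : Prop :=
  Computable f ∧ ∀ n : ℕ, coin (cyl (W (f n))) ≤ (2 : ℝ≥0∞)⁻¹ ^ n

/-- `x` fails the sense-2 test `f`. -/
def Fails (x : ℕ → Bool) (f : ℕ → ℕ) : Prop := ∀ n : ℕ, x ∈ cyl (W (f n))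

/-- Martin-Löf randomness (sense 2). -/
def MLRandom (x : ℕ → Bool) : Prop := ∀ f : ℕ → ℕ, MLTest f → ¬ Fails x f

/-- The dyadic rational value of a finite binary string. -/
noncomputable def sval (b : List Bool) : ℝ :=
  ∑ i : Fin b.length, if b.get i then ((2 : ℝ))⁻¹ ^ (i.val + 1) else 0

/-- Chaitin's halting probability of machine `V`. -/
noncomputable def Omega (V : List Bool →. List Bool) : ℝ :=
  ∑' p : {p : List Bool // (V p).Dom}, ((2 : ℝ))⁻¹ ^ (p.val.length)

/-- Martin-Löf test in sense 1. -/
def MLTest1 (t : List Bool →. ℕ) : Prop :=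
  Partrec t ∧ ∀ m : ℕ, coin (cyl {b | ∃ v ∈ t b, m ≤ v}) ≤ (2 : ℝ≥0∞)⁻¹ ^ m

/-- `x` passes the sense-1 test `t`: the values of `t` on `x`'s prefixes are bounded. -/
def Passes1 (x : ℕ → Bool) (t : List Bool →. ℕ) : Prop :=
  ∃ B : ℕ, ∀ (n : ℕ) (v : ℕ), v ∈ t (pref x n) → v ≤ B

/-- A set of binary strings is computably enumerable. -/
def CE (S : Set (List Bool)) : Prop :=
  ∃ f : List Bool →. ℕ, Partrec f ∧ S = {b | (f b).Dom}

lemma binSeq_measurable : Measurable binSeq := by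
  rw [measurable_pi_iff]
  intro n
  have h1 : Measurable fun r : ℝ => r * 2 ^ (n + 1) := measurable_mul_const _
  have h2 : Measurable fun z : ℤ => decide (z % 2 = 1) := measurable_from_top
  exact h2.comp (Int.measurable_floor.comp h1)

lemma coin_univ : coin Set.univ = 1 := by
  rw [coin, Measure.map_apply binSeq_measurable MeasurableSet.univ, Set.preimage_univ,
    Measure.restrict_apply MeasurableSet.univ, Set.univ_inter, Real.volume_Ioc]
  norm_num

lemma countable_computable : Set.Countable {f : ℕ → ℕ | Computable f} := by
  rw [Set.countable_iff_exists_injective]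
  refine ⟨fun ⟨f, hf⟩ => Encodable.encode
    (Nat.Partrec.Code.exists_code.1 (Partrec.nat_iff.1 hf)).choose, ?_⟩
  rintro ⟨f, hf⟩ ⟨g, hg⟩ h
  simp only [Encodable.encode_inj] at h
  have hf' := (Nat.Partrec.Code.exists_code.1 (Partrec.nat_iff.1 hf)).choose_spec
  have hg' := (Nat.Partrec.Code.exists_code.1 (Partrec.nat_iff.1 hg)).choose_spec
  rw [h, hg'] at hf'
  apply Subtype.ext
  funext n
  exact Part.some_inj.mp (congrFun hf' n).symm

lemma inter_null {f : ℕ → ℕ} (hf : MLTest f) : coin (⋂ n, cyl (W (f n))) = 0 := by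
  by_contra h
  obtain ⟨n, hn⟩ := ENNReal.exists_inv_two_pow_lt h
  exact absurd (le_trans (measure_mono (Set.iInter_subset _ n)) (hf.2 n)) (not_le.mpr hn)

/-- The set of Martin-Löf random sequences has measure 1. -/
theorem stmt18 : coin {x : ℕ → Bool | MLRandom x} = 1 := by
  have hcompl : coin {x : ℕ → Bool | MLRandom x}ᶜ = 0 := by
    refine measure_mono_null (t := ⋃ f ∈ {f : ℕ → ℕ | MLTest f}, ⋂ n, cyl (W (f n))) ?_ ?_
    · intro x hx
      simp only [Set.mem_compl_iff, Set.mem_setOf_eq, MLRandom, not_forall] at hx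
      obtain ⟨f, hf, hfail⟩ := hx
      rw [not_not] at hfail
      exact Set.mem_biUnion hf (Set.mem_iInter.mpr hfail)
    · refine (measure_biUnion_null_iff ?_).mpr fun f hf => inter_null hf
      exact (countable_computable.mono fun f hf => hf.1)
  refine le_antisymm (coin_univ ▸ measure_mono (Set.subset_univ _)) ?_
  calc (1 : ℝ≥0∞) = coin Set.univ := coin_univ.symm
    _ ≤ coin {x : ℕ → Bool | MLRandom x} + coin {x : ℕ → Bool | MLRandom x}ᶜ := by
        rw [← Set.union_compl_self {x : ℕ → Bool | MLRandom x}]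
        exact measure_union_le _ _
    _ = coin {x : ℕ → Bool | MLRandom x} := by rw [hcompl, add_zero]
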